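/- More generally, with the setup of Kemperman's formula, the probability Ψ_k(n) that k independent BGW_μ trees have total size n equals (k/n) P(Wₙ = −k). -/

import Mathlib

open Finset

/-- A finite plane tree in Neveu's formalism: a finite set of words of positive
integers (children are labelled `1, …, k`), containing the root `[]`, closed
under taking parents (`dropLast`) and under taking left-siblings. -/
structure PlaneTree where
  verts : Finset (List ℕ)
  root_mem : [] ∈ verts
  parent_mem : ∀ v ∈ verts, v.dropLast ∈ verts
  no_zero : ∀ v : List ℕ, v ++ [0] ∉ verts
  sib_closed : ∀ (v : List ℕ) (i j : ℕ), v ++ [j] ∈ verts → 1 ≤ i → i ≤ j → v ++ [i] ∈ verts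

namespace PlaneTree

/-- The number of vertices of a plane tree. -/
def size (τ : PlaneTree) : ℕ := τ.verts.card

/-- The number of children `k_v(τ)` of a vertex `v`. -/
def numChildren (τ : PlaneTree) (v : List ℕ) : ℕ :=
  (τ.verts.filter (fun w => w ≠ [] ∧ w.dropLast = v)).card

/-- The list of vertices of `τ` in lexicographical order. -/
noncomputable def vertexList (τ : PlaneTree) : List (List ℕ) :=
  τ.verts.sort (· ≤ ·)

/-- The `i`-th vertex of `τ` in lexicographical order. -/
noncomputable def vertex (τ : PlaneTree) (i : ℕ) : List ℕ :=
  (τ.vertexList).getD i []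

/-- The height function: the height `|uᵢ|` of the `i`-th vertex in lexicographical order. -/
noncomputable def heightFn (τ : PlaneTree) (i : ℕ) : ℕ := (τ.vertex i).length

/-- The Łukasiewicz path of `τ`: `W₀ = 0`, `W_{n+1} = Wₙ + k_{uₙ} - 1`. -/
noncomputable def luka (τ : PlaneTree) (n : ℕ) : ℤ :=
  (∑ i ∈ range n, (τ.numChildren (τ.vertex i) : ℤ)) - n

/-- The adjacency relation of the looptree `Loop(τ)`: `u ∼ v` iff `u, v` are consecutive
children of the same parent, or `v` is the first or the last child of `u` (or vice versa). -/
def loopAdj (τ : PlaneTree) (u v : List ℕ) : Prop :=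
  u ∈ τ.verts ∧ v ∈ τ.verts ∧ u ≠ v ∧
    ((∃ p i, u = p ++ [i] ∧ v = p ++ [i + 1]) ∨ (∃ p i, v = p ++ [i] ∧ u = p ++ [i + 1]) ∨
      v = u ++ [1] ∨ u = v ++ [1] ∨
      v = u ++ [τ.numChildren u] ∨ u = v ++ [τ.numChildren v])

/-- The looptree `Loop(τ)`, as a graph on the vertices of `τ`. -/
def loopGraph (τ : PlaneTree) : SimpleGraph (List ℕ) where
  Adj := τ.loopAdj
  symm := by
    constructor
    intro u v h
    obtain ⟨hu, hv, hne, h⟩ := h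
    refine ⟨hv, hu, hne.symm, ?_⟩
    rcases h with h | h | h | h | h | h
    · exact Or.inr (Or.inl h)
    · exact Or.inl h
    · exact Or.inr (Or.inr (Or.inr (Or.inl h)))
    · exact Or.inr (Or.inr (Or.inl h))
    · exact Or.inr (Or.inr (Or.inr (Or.inr (Or.inr h))))
    · exact Or.inr (Or.inr (Or.inr (Or.inr (Or.inl h))))
  loopless := by constructor; intro u h; exact h.2.2.1 rfl

/-- The looptree distance `H°ᵢ(τ) = d°_τ(∅, uᵢ)` from the root to the `i`-th vertex
in lexicographical order. -/
noncomputable def loopHeight (τ : PlaneTree) (i : ℕ) : ℕ :=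
  (τ.loopGraph).dist [] (τ.vertex i)

/-- The number of leaves `Λ(τ)`. -/
def numLeaves (τ : PlaneTree) : ℕ :=
  (τ.verts.filter (fun v => τ.numChildren v = 0)).card

end PlaneTree

namespace PlaneTree

/-- The Bienaymé–Galton–Watson weight of a finite plane tree:
`BGW_μ(τ) = ∏_{u ∈ τ} μ(k_u(τ))`. -/
noncomputable def bgwWeight (μ : ℕ → ℝ) (τ : PlaneTree) : ℝ :=
  ∏ v ∈ τ.verts, μ (τ.numChildren v)

end PlaneTree

/-- `P(Wₙ = -k)` for the left-continuous random walk with i.i.d. steps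
`P(W₁ = i) = μ(i+1)`, `i ≥ -1`, started at `0`. -/
noncomputable def walkProb (μ : ℕ → ℝ) (n : ℕ) (k : ℤ) : ℝ :=
  ∑' f : {f : Fin n → ℕ // (∑ i, (f i : ℤ)) = (n : ℤ) - k}, ∏ i, μ (f.1 i)

/-!
Both sides satisfy the same recursion. Removing the root of the first tree of a forest of
`k + 1` trees of total size `n + 1` whose first root has `j` children leaves a forest of `j + k`
trees of total size `n`; removing the first step `j - 1` of a walk that first hits `-(k + 1)` at
time `n + 1` leaves a walk that first hits `-(j + k)` at time `n`. Hence `Ψ_k(n)` is the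
probability that the walk first hits `-k` at time `n`.

The cycle lemma turns this into `n Ψ_k(n) = k P(Wₙ = -k)`: of the `n` cyclic rotations of steps
summing to `-k`, exactly `k` first hit `-k` at time `n`. The rotation starting at `c` does so iff
`c + n` is a strict descending ladder time of the periodic extension of the path, and since this
path is skip-free downwards and drops by `k` in each period, every window `[n, 2n)` contains
exactly `k` ladder times.
-/

theorem Finset.eq_Icc_one_card {S : Finset ℕ} (h0 : 0 ∉ S)
    (hS : ∀ i j, j ∈ S → 1 ≤ i → i ≤ j → i ∈ S) : S = Icc 1 #S := by
  rcases S.eq_empty_or_nonempty with rfl | hne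
  · simp
  have hIcc : S = Icc 1 (S.max' hne) := by
    ext i
    refine ⟨fun hi => mem_Icc.2 ⟨Nat.one_le_iff_ne_zero.2 (by rintro rfl; exact h0 hi),
      S.le_max' i hi⟩, fun hi => ?_⟩
    exact hS i _ (S.max'_mem hne) (mem_Icc.1 hi).1 (mem_Icc.1 hi).2
  conv_rhs => rw [hIcc, Nat.card_Icc, Nat.add_sub_cancel]
  exact hIcc

theorem Finite.of_fibers {α : Type*} (p : α → ℕ) {N : ℕ} (hp : ∀ a, p a < N)
    (h : ∀ j < N, Finite {a // p a = j}) : Finite α :=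
  have (j : Fin N) : Finite {a // p a = j} := h j j.2
  Finite.of_injective (fun a => (⟨⟨p a, hp a⟩, a, rfl⟩ : Σ j : Fin N, {a // p a = j}))
    fun _ _ h => congrArg (fun s => s.2.1) h

theorem tsum_eq_sum_range_tsum_fiber {α M : Type*} [AddCommMonoid M] [TopologicalSpace M]
    [Finite α] (p : α → ℕ) {N : ℕ} (hp : ∀ a, p a < N) (f : α → M) :
    ∑' a, f a = ∑ j ∈ range N, ∑' a : {a // p a = j}, f a := by
  classical
  have := Fintype.ofFinite α
  rw [tsum_fintype, ← Finset.sum_fiberwise_of_maps_to (t := range N) (g := p)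
    fun a _ => mem_range.2 (hp a)]
  refine sum_congr rfl fun j _ => ?_
  rw [tsum_fintype]
  exact Finset.sum_subtype _ (by simp) f

theorem tsum_subtype_eq_sum_ite {α M : Type*} [AddCommMonoid M] [TopologicalSpace M]
    {P : α → Prop} [DecidablePred P] (s : Finset α) (hs : ∀ a, P a → a ∈ s) (f : α → M) :
    ∑' a : {a // P a}, f a = ∑ a ∈ s, if P a then f a else 0 := by
  refine (tsum_subtype {a | P a} f).trans ((tsum_eq_sum (s := s) fun a ha => ?_).trans ?_)
  · exact Set.indicator_of_notMem (fun h => ha (hs a h)) f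
  · exact sum_congr rfl fun a _ => Set.indicator_apply _ _ _

theorem card_filter_range_add_self {n : ℕ} (Q : ℕ → Prop) [DecidablePred Q] :
    #{t ∈ range (n + n) | Q t} = #{t ∈ range n | Q t} + #{c : Fin n | Q (c.1 + n)} := by
  simp only [card_filter, sum_range_add]
  rw [← Fin.sum_univ_eq_sum_range (fun x => if Q (n + x) then 1 else 0)]
  simp only [add_comm n]

namespace PlaneTree

@[ext]
theorem ext {τ σ : PlaneTree} (h : τ.verts = σ.verts) : τ = σ := by
  cases τ; cases σ; cases h; rfl

theorem mem_of_prefix (τ : PlaneTree) {u w : List ℕ} (h : u <+: w) (hw : w ∈ τ.verts) :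
    u ∈ τ.verts := by
  induction w using List.reverseRecOn with
  | nil => rwa [List.prefix_nil.1 h]
  | append_singleton w a ih =>
    rcases List.prefix_concat_iff.1 h with rfl | h
    · exact hw
    · exact ih h (by simpa using τ.parent_mem _ hw)

theorem numChildren_lt_size (τ : PlaneTree) (v : List ℕ) : τ.numChildren v < τ.size :=
  calc τ.numChildren v ≤ #(τ.verts.erase []) := card_le_card fun w hw => by
        simp only [mem_filter] at hw
        exact mem_erase.2 ⟨hw.2.1, hw.1⟩
    _ < τ.size := card_erase_lt_of_mem τ.root_mem

theorem append_singleton_mem_iff (τ : PlaneTree) (v : List ℕ) (j : ℕ) :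
    v ++ [j] ∈ τ.verts ↔ 1 ≤ j ∧ j ≤ τ.numChildren v := by
  obtain ⟨J, hJ⟩ : ∃ J : Finset ℕ, ∀ j, j ∈ J ↔ v ++ [j] ∈ τ.verts :=
    ⟨τ.verts.preimage (fun j => v ++ [j]) (fun a _ b _ h => by simpa using h),
      fun _ => Finset.mem_preimage⟩
  have hcard : τ.numChildren v = #J := by
    rw [numChildren, ← Finset.card_image_of_injective J (f := fun j => v ++ [j])
      (fun a b h => by simpa using h)]
    congr 1
    ext w
    simp only [Finset.mem_filter, Finset.mem_image, hJ]
    constructor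
    · rintro ⟨hw, hne, rfl⟩
      exact ⟨_, by rwa [List.dropLast_append_getLast hne], List.dropLast_append_getLast hne⟩
    · rintro ⟨j, hj, rfl⟩
      simpa using hj
  have hIcc : J = Icc 1 #J := Finset.eq_Icc_one_card (by simpa [hJ] using τ.no_zero v)
    (by simpa [hJ] using τ.sib_closed v)
  rw [← hJ, hcard, ← Finset.mem_Icc, ← hIcc]

-- `[]` is inserted so that this is a plane tree even when `[a] ∉ τ.verts`.
noncomputable def subtree (τ : PlaneTree) (a : ℕ) : PlaneTree where
  verts := insert [] (τ.verts.preimage (List.cons a) List.cons_injective.injOn)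
  root_mem := Finset.mem_insert_self _ _
  parent_mem v hv := by
    simp only [Finset.mem_insert, Finset.mem_preimage] at hv ⊢
    rcases eq_or_ne v [] with rfl | hne
    · exact Or.inl rfl
    · right
      simpa [List.dropLast_cons_of_ne_nil hne] using τ.parent_mem _ (hv.resolve_left hne)
  no_zero v hv := by
    simp only [Finset.mem_insert, Finset.mem_preimage, List.append_eq_nil_iff] at hv
    exact τ.no_zero (a :: v) (by simpa using hv)
  sib_closed v i j hv hi hij := by
    simp only [Finset.mem_insert, Finset.mem_preimage, List.append_eq_nil_iff] at hv ⊢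
    exact Or.inr (by simpa using τ.sib_closed (a :: v) i j (by simpa using hv) hi hij)

@[simp]
theorem mem_subtree (τ : PlaneTree) (a : ℕ) (w : List ℕ) :
    w ∈ (τ.subtree a).verts ↔ w = [] ∨ a :: w ∈ τ.verts := by
  simp [subtree]

def node {c : ℕ} (g : Fin c → PlaneTree) : PlaneTree where
  verts := insert [] (univ.biUnion fun i : Fin c =>
    (g i).verts.map ⟨List.cons (i.1 + 1), List.cons_injective⟩)
  root_mem := Finset.mem_insert_self _ _
  parent_mem v hv := by
    simp only [Finset.mem_insert, Finset.mem_biUnion, Finset.mem_univ, true_and,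
      Finset.mem_map, Function.Embedding.coeFn_mk] at hv ⊢
    rcases hv with rfl | ⟨i, u, hu, rfl⟩
    · exact Or.inl rfl
    rcases eq_or_ne u [] with rfl | hne
    · exact Or.inl rfl
    · exact Or.inr ⟨i, u.dropLast, (g i).parent_mem u hu, (List.dropLast_cons_of_ne_nil hne).symm⟩
  no_zero v hv := by
    simp only [Finset.mem_insert, Finset.mem_biUnion, Finset.mem_univ, true_and,
      Finset.mem_map, Function.Embedding.coeFn_mk, List.append_eq_nil_iff] at hv
    rcases hv with ⟨-, h⟩ | ⟨i, u, hu, h⟩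
    · exact List.cons_ne_nil _ _ h
    cases v with
    | nil => simp at h
    | cons b v =>
      obtain ⟨-, rfl⟩ := List.cons_eq_cons.1 h
      exact (g i).no_zero v hu
  sib_closed v i j hv hi hij := by
    simp only [Finset.mem_insert, Finset.mem_biUnion, Finset.mem_univ, true_and,
      Finset.mem_map, Function.Embedding.coeFn_mk, List.append_eq_nil_iff] at hv ⊢
    rcases hv with ⟨-, h⟩ | ⟨m, u, hu, h⟩
    · exact absurd h (List.cons_ne_nil _ _)
    right
    cases v with
    | nil =>
      obtain ⟨rfl, rfl⟩ := List.cons_eq_cons.1 h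
      exact ⟨⟨i - 1, by omega⟩, [], (g _).root_mem, by simp; omega⟩
    | cons b v =>
      obtain ⟨rfl, rfl⟩ := List.cons_eq_cons.1 h
      exact ⟨m, v ++ [i], (g m).sib_closed v i j hu hi hij, rfl⟩

@[simp]
theorem nil_mem_node {c : ℕ} (g : Fin c → PlaneTree) : [] ∈ (node g).verts :=
  (node g).root_mem

@[simp]
theorem cons_mem_node {c : ℕ} (g : Fin c → PlaneTree) (a : ℕ) (u : List ℕ) :
    a :: u ∈ (node g).verts ↔ ∃ i : Fin c, i.1 + 1 = a ∧ u ∈ (g i).verts := by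
  simp [node, and_comm]

theorem numChildren_eq_of_forall {τ : PlaneTree} {v : List ℕ} {c : ℕ}
    (h : ∀ j, v ++ [j] ∈ τ.verts ↔ 1 ≤ j ∧ j ≤ c) : τ.numChildren v = c := by
  have h1 := (τ.append_singleton_mem_iff v c).symm.trans (h c)
  have h2 := (τ.append_singleton_mem_iff v _).symm.trans (h (τ.numChildren v))
  omega

theorem numChildren_node_nil {c : ℕ} (g : Fin c → PlaneTree) : (node g).numChildren [] = c :=
  numChildren_eq_of_forall fun j => by
    simp only [List.nil_append, cons_mem_node, List.nil_append]
    constructor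
    · rintro ⟨i, rfl, -⟩
      omega
    · exact fun hj => ⟨⟨j - 1, by omega⟩, by simp; omega, (g _).root_mem⟩

theorem numChildren_node_cons {c : ℕ} (g : Fin c → PlaneTree) (i : Fin c) (w : List ℕ) :
    (node g).numChildren ((i.1 + 1) :: w) = (g i).numChildren w :=
  numChildren_eq_of_forall fun j => by
    rw [List.cons_append, cons_mem_node, ← append_singleton_mem_iff]
    constructor
    · rintro ⟨i', hi, hw⟩
      rwa [← Fin.ext (Nat.succ_injective hi)]
    · exact fun hw => ⟨i, rfl, hw⟩

theorem subtree_node {c : ℕ} (g : Fin c → PlaneTree) (i : Fin c) :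
    (node g).subtree (i.1 + 1) = g i := by
  ext w
  simp only [mem_subtree, cons_mem_node, Nat.add_right_cancel_iff, Fin.val_inj]
  constructor
  · rintro (rfl | ⟨i, rfl, hw⟩)
    exacts [(g i).root_mem, hw]
  · exact fun hw => Or.inr ⟨i, rfl, hw⟩

theorem node_subtree {τ : PlaneTree} {c : ℕ} (hc : τ.numChildren [] = c) :
    node (fun i : Fin c => τ.subtree (i.1 + 1)) = τ := by
  ext w
  cases w with
  | nil => simpa using τ.root_mem
  | cons a u =>
    simp only [cons_mem_node, mem_subtree]
    constructor
    · rintro ⟨i, rfl, rfl | hu⟩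
      · exact (τ.append_singleton_mem_iff [] _).2 ⟨by omega, by omega⟩
      · exact hu
    · intro hu
      have ha := (τ.append_singleton_mem_iff [] a).1 (τ.mem_of_prefix (by simp) hu)
      exact ⟨⟨a - 1, by omega⟩, by simp; omega, Or.inr (by rwa [Nat.sub_add_cancel ha.1])⟩

@[to_additive]
theorem prod_verts_node {M : Type*} [CommMonoid M] (f : List ℕ → M) {c : ℕ}
    (g : Fin c → PlaneTree) :
    ∏ v ∈ (node g).verts, f v = f [] * ∏ i, ∏ u ∈ (g i).verts, f ((i.1 + 1) :: u) := by
  simp only [node]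
  rw [prod_insert (by simp), prod_biUnion fun i _ j _ hij => ?_]
  · simp
  simp only [Function.onFun, Finset.disjoint_left, Finset.mem_map, Function.Embedding.coeFn_mk]
  rintro _ ⟨u, -, rfl⟩ ⟨u', -, h⟩
  exact hij (Fin.ext (Nat.succ_injective (List.cons_eq_cons.1 h).1)).symm

theorem size_node {c : ℕ} (g : Fin c → PlaneTree) : (node g).size = 1 + ∑ i, (g i).size := by
  simp only [size, card_eq_sum_ones, sum_verts_node]

theorem bgwWeight_node (μ : ℕ → ℝ) {c : ℕ} (g : Fin c → PlaneTree) :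
    bgwWeight μ (node g) = μ c * ∏ i, bgwWeight μ (g i) := by
  simp [bgwWeight, prod_verts_node, numChildren_node_nil, numChildren_node_cons]

end PlaneTree

open PlaneTree

abbrev Forest (k n : ℕ) : Type := {F : Fin k → PlaneTree // ∑ i, (F i).size = n}

noncomputable def forestProb (μ : ℕ → ℝ) (k n : ℕ) : ℝ :=
  ∑' F : Forest k n, ∏ i, bgwWeight μ (F.1 i)

namespace Forest

noncomputable def removeFirstRoot (j k n : ℕ) :
    {F : Forest (k + 1) (n + 1) // (F.1 0).numChildren [] = j} ≃ Forest (j + k) n where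
  toFun F := ⟨Fin.append (fun i : Fin j => (F.1.1 0).subtree (i.1 + 1)) (Fin.tail F.1.1), by
    have hsize := size_node fun i : Fin j => (F.1.1 0).subtree (i.1 + 1)
    have hF := F.1.2
    rw [node_subtree F.2] at hsize
    rw [Fin.sum_univ_succ, hsize] at hF
    simp only [Fin.sum_univ_add, Fin.append_left, Fin.append_right, Fin.tail]
    omega⟩
  invFun G := ⟨⟨Fin.cons (node fun i => G.1 (Fin.castAdd k i)) fun i => G.1 (Fin.natAdd j i), by
    have hG := G.2
    rw [Fin.sum_univ_add] at hG
    simp only [Fin.sum_univ_succ, Fin.cons_zero, Fin.cons_succ, size_node]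
    omega⟩, numChildren_node_nil _⟩
  left_inv F := by
    ext1; ext1; funext i
    cases i using Fin.cases with
    | zero => simpa using node_subtree F.2
    | succ i => simp [Fin.tail]
  right_inv G := by
    ext1
    simp [subtree_node, Fin.append_castAdd_natAdd]

theorem prod_bgwWeight_removeFirstRoot (μ : ℕ → ℝ) {j k n : ℕ}
    (F : {F : Forest (k + 1) (n + 1) // (F.1 0).numChildren [] = j}) :
    ∏ i, bgwWeight μ (F.1.1 i) = μ j * ∏ i, bgwWeight μ ((removeFirstRoot j k n F).1 i) := by
  have hw := bgwWeight_node μ fun i : Fin j => (F.1.1 0).subtree (i.1 + 1)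
  rw [node_subtree F.2] at hw
  simp [removeFirstRoot, Fin.prod_univ_succ, Fin.prod_univ_add, hw, mul_assoc, Fin.tail]

theorem numChildren_zero_lt {k n : ℕ} (F : Forest (k + 1) n) : (F.1 0).numChildren [] < n := by
  have := (F.1 0).numChildren_lt_size []
  have := Finset.single_le_sum (f := fun i => (F.1 i).size) (fun _ _ => Nat.zero_le _) (mem_univ 0)
  have := F.2
  omega

instance (k : ℕ) : IsEmpty (Forest (k + 1) 0) :=
  ⟨fun F => Nat.not_lt_zero _ (numChildren_zero_lt F)⟩

instance finite (k n : ℕ) : Finite (Forest k n) := by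
  induction n generalizing k with
  | zero => cases k <;> infer_instance
  | succ n ih =>
    cases k with
    | zero => infer_instance
    | succ k =>
      exact Finite.of_fibers _ numChildren_zero_lt fun j _ =>
        Finite.of_equiv _ (removeFirstRoot j k n).symm

end Forest

theorem forestProb_zero_left (μ : ℕ → ℝ) (n : ℕ) :
    forestProb μ 0 n = if n = 0 then 1 else 0 := by
  cases n <;> simp [forestProb, Fintype.card_subtype]

theorem forestProb_succ_zero (μ : ℕ → ℝ) (k : ℕ) : forestProb μ (k + 1) 0 = 0 :=
  tsum_empty

theorem forestProb_succ_succ (μ : ℕ → ℝ) (k n : ℕ) :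
    forestProb μ (k + 1) (n + 1) = ∑ j ∈ range (n + 1), μ j * forestProb μ (j + k) n := by
  rw [forestProb, tsum_eq_sum_range_tsum_fiber _ Forest.numChildren_zero_lt]
  refine sum_congr rfl fun j _ => ?_
  simp_rw [Forest.prod_bgwWeight_removeFirstRoot, tsum_mul_left, forestProb]
  congr 1
  exact (Forest.removeFirstRoot j k n).tsum_eq (fun G => ∏ i, bgwWeight μ (G.1 i))

section FirstHit

variable {n : ℕ}

-- A step `W_{i+1} - Wᵢ = j - 1` is encoded as `g i = j`, as in `walkProb`.
def lukaPath (g : Fin n → ℕ) (m : ℕ) : ℤ := ∑ i with i.1 < m, ((g i : ℤ) - 1)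

def IsFirstHit (k : ℕ) (g : Fin n → ℕ) : Prop :=
  lukaPath g n = -k ∧ ∀ m < n, -(k : ℤ) < lukaPath g m

instance (k : ℕ) : DecidablePred (IsFirstHit (n := n) k) :=
  fun _ => inferInstanceAs (Decidable (_ ∧ ∀ m < n, _))

noncomputable def firstHitProb (μ : ℕ → ℝ) (k n : ℕ) : ℝ :=
  ∑' g : {g : Fin n → ℕ // IsFirstHit k g}, ∏ i, μ (g.1 i)

@[simp]
theorem lukaPath_zero (g : Fin n → ℕ) : lukaPath g 0 = 0 := by
  simp [lukaPath]

theorem lukaPath_self (g : Fin n → ℕ) : lukaPath g n = ∑ i, (g i : ℤ) - n := by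
  simp [lukaPath, Finset.sum_sub_distrib]

theorem lukaPath_cons_succ (j : ℕ) (t : Fin n → ℕ) (m : ℕ) :
    lukaPath (Fin.cons j t : Fin (n + 1) → ℕ) (m + 1) = j - 1 + lukaPath t m := by
  simp only [lukaPath, Finset.sum_filter, Fin.sum_univ_succ, Fin.val_zero, Fin.cons_zero,
    Fin.cons_succ, Fin.val_succ, Nat.add_lt_add_iff_right, Nat.zero_lt_succ, if_true]

theorem IsFirstHit.sum_eq {k : ℕ} {g : Fin n → ℕ} (h : IsFirstHit k g) :
    ∑ i, (g i : ℤ) = n - k := by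
  have := h.1
  rw [lukaPath_self] at this
  omega

theorem isFirstHit_cons_iff {k : ℕ} (j : ℕ) (t : Fin n → ℕ) :
    IsFirstHit (k + 1) (Fin.cons j t : Fin (n + 1) → ℕ) ↔ IsFirstHit (j + k) t := by
  simp only [IsFirstHit, Nat.forall_lt_succ_left', lukaPath_zero, lukaPath_cons_succ]
  push_cast
  constructor
  · rintro ⟨h, -, hlt⟩
    exact ⟨by omega, fun m hm => by have := hlt m hm; omega⟩
  · rintro ⟨h, hlt⟩
    exact ⟨by omega, by omega, fun m hm => by have := hlt m hm; omega⟩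

def stepSeqs (n k : ℕ) : Finset (Fin n → ℕ) :=
  {g ∈ Fintype.piFinset fun _ => range (n + 1) | ∑ i, (g i : ℤ) = n - k}

theorem mem_stepSeqs {k : ℕ} {g : Fin n → ℕ} : g ∈ stepSeqs n k ↔ ∑ i, (g i : ℤ) = n - k := by
  refine ⟨fun h => (mem_filter.1 h).2, fun h => mem_filter.2 ⟨?_, h⟩⟩
  refine Fintype.mem_piFinset.2 fun i => mem_range.2 ?_
  have := Finset.single_le_sum (f := fun i => (g i : ℤ)) (fun _ _ => by positivity) (mem_univ i)
  omega

instance (k n : ℕ) : Finite {g : Fin n → ℕ // IsFirstHit k g} :=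
  Finite.of_injective (fun g => (⟨g.1, mem_stepSeqs.2 g.2.sum_eq⟩ : stepSeqs n k))
    fun _ _ h => Subtype.ext (by simpa using h)

theorem walkProb_eq_sum (μ : ℕ → ℝ) (k : ℕ) :
    walkProb μ n k = ∑ g ∈ stepSeqs n k, ∏ i, μ (g i) :=
  (tsum_subtype_eq_sum_ite _ (fun _ => mem_stepSeqs.2) fun g => ∏ i, μ (g i)).trans
    (sum_congr rfl fun _ hg => if_pos (mem_stepSeqs.1 hg))

theorem firstHitProb_eq_sum (μ : ℕ → ℝ) (k : ℕ) :
    firstHitProb μ k n = ∑ g ∈ stepSeqs n k, if IsFirstHit k g then ∏ i, μ (g i) else 0 :=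
  tsum_subtype_eq_sum_ite (P := IsFirstHit k) _ (fun _ h => mem_stepSeqs.2 h.sum_eq)
    fun g => ∏ i, μ (g i)

theorem IsFirstHit.zero_lt {k : ℕ} {g : Fin (n + 1) → ℕ} (h : IsFirstHit (k + 1) g) :
    g 0 < n + 1 := by
  have := Finset.single_le_sum (f := fun i => (g i : ℤ)) (fun _ _ => by positivity) (mem_univ 0)
  have := h.sum_eq
  push_cast at *
  omega

def IsFirstHit.removeFirstStep (j k n : ℕ) :
    {g : {g : Fin (n + 1) → ℕ // IsFirstHit (k + 1) g} // g.1 0 = j} ≃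
      {t : Fin n → ℕ // IsFirstHit (j + k) t} where
  toFun g := ⟨Fin.tail g.1.1, by
    have h := g.1.2
    rwa [← Fin.cons_self_tail g.1.1, g.2, isFirstHit_cons_iff] at h⟩
  invFun t := ⟨⟨Fin.cons j t.1, (isFirstHit_cons_iff j t.1).2 t.2⟩, rfl⟩
  left_inv g := by
    ext1; ext1
    simp [← g.2]
  right_inv t := by
    ext1
    simp

theorem firstHitProb_zero_left (μ : ℕ → ℝ) (n : ℕ) :
    firstHitProb μ 0 n = if n = 0 then 1 else 0 := by
  rcases n with _ | n
  · simp [firstHitProb, IsFirstHit, Fintype.card_subtype]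
  · have : IsEmpty {g : Fin (n + 1) → ℕ // IsFirstHit 0 g} :=
      ⟨fun g => by simpa using g.2.2 0 n.succ_pos⟩
    exact tsum_empty

theorem firstHitProb_succ_zero (μ : ℕ → ℝ) (k : ℕ) : firstHitProb μ (k + 1) 0 = 0 := by
  have : IsEmpty {g : Fin 0 → ℕ // IsFirstHit (k + 1) g} :=
    ⟨fun g => by have := g.2.1; simp at this; omega⟩
  exact tsum_empty

theorem firstHitProb_succ_succ (μ : ℕ → ℝ) (k n : ℕ) :
    firstHitProb μ (k + 1) (n + 1) = ∑ j ∈ range (n + 1), μ j * firstHitProb μ (j + k) n := by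
  rw [firstHitProb, tsum_eq_sum_range_tsum_fiber (fun g => g.1 0) fun g => g.2.zero_lt]
  refine sum_congr rfl fun j _ => ?_
  rw [firstHitProb, ← tsum_mul_left, ← (IsFirstHit.removeFirstStep j k n).tsum_eq]
  refine tsum_congr fun g => ?_
  rw [Fin.prod_univ_succ, g.2]
  rfl

end FirstHit

theorem forestProb_eq_firstHitProb (μ : ℕ → ℝ) (k n : ℕ) :
    forestProb μ k n = firstHitProb μ k n := by
  induction n generalizing k with
  | zero =>
    cases k
    · rw [forestProb_zero_left, firstHitProb_zero_left]
    · rw [forestProb_succ_zero, firstHitProb_succ_zero]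
  | succ n ih =>
    cases k
    · rw [forestProb_zero_left, firstHitProb_zero_left]
    · simp only [forestProb_succ_succ, firstHitProb_succ_succ, ih]

def IsLadderTime (S : ℕ → ℤ) (t : ℕ) : Prop := ∀ m < t, S t < S m

instance (S : ℕ → ℤ) : DecidablePred (IsLadderTime S) :=
  fun t => inferInstanceAs (Decidable (∀ m < t, S t < S m))

-- A path that is skip-free downwards reaches each new minimum at exactly one ladder time.
theorem card_filter_isLadderTime_range {S : ℕ → ℤ} (hS : ∀ t, S t - 1 ≤ S (t + 1)) {m : ℕ}
    (hm : (range m).Nonempty) :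
    (#{t ∈ range m | IsLadderTime S t} : ℤ) = S 0 + 1 - (range m).inf' hm S := by
  induction m with
  | zero => simp at hm
  | succ m ih =>
    rcases m.eq_zero_or_pos with rfl | hpos
    · simp [IsLadderTime, filter_singleton]
    have hm' : (range m).Nonempty := nonempty_range_iff.2 hpos.ne'
    set L := (range m).inf' hm' S
    have hL : L ≤ S (m - 1) := inf'_le _ (mem_range.2 (by omega))
    have hskip := hS (m - 1)
    rw [Nat.sub_add_cancel hpos] at hskip
    have hlad : IsLadderTime S m ↔ S m < L := by
      simp [L, IsLadderTime, lt_inf'_iff]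
    rw [inf'_congr hm range_add_one fun _ _ => rfl, inf'_insert hm', range_add_one, filter_insert]
    by_cases h : IsLadderTime S m
    · rw [if_pos h, card_insert_of_notMem (by simp), Nat.cast_succ, ih hm',
        min_eq_left (hlad.1 h).le]
      have := hlad.1 h
      omega
    · rw [if_neg h, ih hm', min_eq_right (not_lt.1 (mt hlad.2 h))]

section Cycle

open Fin.NatCast

variable {n : ℕ} [NeZero n]

-- `(i : Fin n)` is `i mod n`: this is the path of the periodic extension of `g`.
def periodicPath (g : Fin n → ℕ) (t : ℕ) : ℤ := ∑ i ∈ range t, ((g (i : Fin n) : ℤ) - 1)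

theorem periodicPath_sub_one_le (g : Fin n → ℕ) (t : ℕ) :
    periodicPath g t - 1 ≤ periodicPath g (t + 1) := by
  simp only [periodicPath, sum_range_succ]
  omega

theorem sum_range_natCast_eq_sum {M : Type*} [AddCommMonoid M] (f : Fin n → M) :
    ∑ i ∈ range n, f (i : Fin n) = ∑ i, f i := by
  simpa using (Fin.sum_univ_eq_sum_range (fun i => f (i : Fin n)) n).symm

theorem periodicPath_add_self {k : ℕ} {g : Fin n → ℕ} (hg : ∑ i, (g i : ℤ) = n - k) (t : ℕ) :
    periodicPath g (t + n) = periodicPath g t - k := by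
  rw [periodicPath, add_comm, sum_range_add, sum_range_natCast_eq_sum fun i => (g i : ℤ) - 1]
  simp [periodicPath, sum_sub_distrib, hg]
  ring

theorem lukaPath_eq_sum_range (g : Fin n → ℕ) {m : ℕ} (hm : m ≤ n) :
    lukaPath g m = ∑ i ∈ range m, ((g (i : Fin n) : ℤ) - 1) := by
  rw [lukaPath, sum_filter, ← sum_range_natCast_eq_sum, ← sum_filter]
  refine sum_congr (ext fun i => ?_) fun _ _ => rfl
  simp only [mem_filter, mem_range, Fin.val_natCast]
  constructor
  · rintro ⟨hi, him⟩
    rwa [Nat.mod_eq_of_lt hi] at him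
  · intro him
    exact ⟨by omega, by rwa [Nat.mod_eq_of_lt (by omega)]⟩

theorem lukaPath_rotate (g : Fin n → ℕ) (c : Fin n) {m : ℕ} (hm : m ≤ n) :
    lukaPath (fun i => g (i + c)) m = periodicPath g (c + m) - periodicPath g c := by
  rw [lukaPath_eq_sum_range _ hm, periodicPath, sum_range_add]
  simp [periodicPath, add_comm]

theorem isFirstHit_rotate_iff {k : ℕ} {g : Fin n → ℕ} (hg : ∑ i, (g i : ℤ) = n - k) (c : Fin n) :
    IsFirstHit k (fun i => g (i + c)) ↔ IsLadderTime (periodicPath g) (c.1 + n) := by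
  have hper := periodicPath_add_self hg
  have hrot (m : ℕ) (hm : m ≤ n) := lukaPath_rotate g c hm
  simp only [IsFirstHit, IsLadderTime, hrot n le_rfl, hper]
  constructor
  · rintro ⟨-, h⟩ t ht
    by_cases hct : c.1 ≤ t
    · have := h (t - c.1) (by omega)
      rw [hrot _ (by omega), Nat.add_sub_cancel' hct] at this
      omega
    · have := h (t + n - c.1) (by omega)
      rw [hrot _ (by omega), show c.1 + (t + n - c.1) = t + n by omega, hper] at this
      omega
  · refine fun h => ⟨by ring, fun m hm => ?_⟩
    have := h (c.1 + m) (by omega)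
    rw [hrot m hm.le]
    omega

theorem inf'_range_add_self {k : ℕ} {g : Fin n → ℕ} (hg : ∑ i, (g i : ℤ) = n - k)
    (h : (range n).Nonempty) (h' : (range (n + n)).Nonempty) :
    (range (n + n)).inf' h' (periodicPath g) = (range n).inf' h (periodicPath g) - k := by
  have hper := periodicPath_add_self hg
  refine le_antisymm (le_sub_iff_add_le.2 (le_inf' _ _ fun t ht => ?_)) (le_inf' _ _ fun t ht => ?_)
  · have := inf'_le (periodicPath g) (mem_range.2 (by simp at ht; omega) : t + n ∈ range (n + n))
    rw [hper] at this
    omega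
  · simp only [mem_range] at ht
    by_cases htn : t < n
    · have := inf'_le (periodicPath g) (mem_range.2 htn)
      omega
    · have := inf'_le (periodicPath g) (mem_range.2 (by omega) : t - n ∈ range n)
      have := hper (t - n)
      rw [Nat.sub_add_cancel (by omega)] at this
      omega

theorem card_isFirstHit_rotate {k : ℕ} {g : Fin n → ℕ} (hg : ∑ i, (g i : ℤ) = n - k) :
    #{c : Fin n | IsFirstHit k (fun i => g (i + c))} = k := by
  have h : (range n).Nonempty := nonempty_range_iff.2 (NeZero.ne n)
  have h' : (range (n + n)).Nonempty := nonempty_range_iff.2 (by simp [NeZero.ne n])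
  have hwin := card_filter_range_add_self (n := n) (IsLadderTime (periodicPath g))
  have hcount := card_filter_isLadderTime_range (periodicPath_sub_one_le g) h
  have hcount' := card_filter_isLadderTime_range (periodicPath_sub_one_le g) h'
  rw [inf'_range_add_self hg h h'] at hcount'
  rw [filter_congr fun c _ => isFirstHit_rotate_iff hg c]
  omega

end Cycle

section Rotation

variable {n : ℕ} [NeZero n]

theorem sum_stepSeqs_rotate {M : Type*} [AddCommMonoid M] (k : ℕ) (F : (Fin n → ℕ) → M)
    (c : Fin n) : ∑ g ∈ stepSeqs n k, F (fun i => g (i + c)) = ∑ g ∈ stepSeqs n k, F g := by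
  refine sum_nbij' (fun g i => g (i + c)) (fun g i => g (i - c)) (fun g hg => ?_)
    (fun g hg => ?_) (fun _ _ => funext fun _ => by simp) (fun _ _ => funext fun _ => by simp)
    fun _ _ => rfl
  · exact mem_stepSeqs.2 ((Equiv.sum_comp (Equiv.addRight c) _).trans (mem_stepSeqs.1 hg))
  · exact mem_stepSeqs.2 ((Equiv.sum_comp (Equiv.subRight c) _).trans (mem_stepSeqs.1 hg))

theorem natCast_mul_firstHitProb (μ : ℕ → ℝ) (k : ℕ) :
    (n : ℝ) * firstHitProb μ k n = k * walkProb μ n k := by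
  have hw (g : Fin n → ℕ) (c : Fin n) : ∏ i, μ (g (i + c)) = ∏ i, μ (g i) :=
    Equiv.prod_comp (Equiv.addRight c) fun i => μ (g i)
  calc (n : ℝ) * firstHitProb μ k n
      = ∑ _c : Fin n, ∑ g ∈ stepSeqs n k, if IsFirstHit k g then ∏ i, μ (g i) else 0 := by
        rw [firstHitProb_eq_sum, sum_const, card_univ, Fintype.card_fin, nsmul_eq_mul]
    _ = ∑ c : Fin n, ∑ g ∈ stepSeqs n k,
          if IsFirstHit k (fun i => g (i + c)) then ∏ i, μ (g i) else 0 := by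
        refine sum_congr rfl fun c _ => ?_
        rw [← sum_stepSeqs_rotate k _ c]
        simp only [hw]
    _ = ∑ g ∈ stepSeqs n k, #{c : Fin n | IsFirstHit k (fun i => g (i + c))} * ∏ i, μ (g i) := by
        rw [sum_comm]
        refine sum_congr rfl fun g _ => ?_
        rw [← sum_filter, sum_const, nsmul_eq_mul]
    _ = k * walkProb μ n k := by
        rw [walkProb_eq_sum, mul_sum]
        exact sum_congr rfl fun g hg => by rw [card_isFirstHit_rotate (mem_stepSeqs.1 hg)]

end Rotation

open PlaneTree in
theorem stmt_5_general (μ : ℕ → ℝ)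
    (k n : ℕ) (hn : 1 ≤ n) :
    (∑' F : {F : Fin k → PlaneTree // ∑ i, (F i).size = n}, ∏ i, bgwWeight μ (F.1 i)) =
      ((k : ℝ) / n) * walkProb μ n k := by
  have : NeZero n := ⟨by omega⟩
  have hn' : (n : ℝ) ≠ 0 := NeZero.ne _
  change forestProb μ k n = _
  rw [forestProb_eq_firstHitProb, div_mul_eq_mul_div, eq_div_iff hn', mul_comm,
    natCast_mul_firstHitProb]

open PlaneTree in
/-- Kemperman's formula for forests: the probability `Ψ_k(n)` that `k` independent
`BGW_μ` trees have total size `n` equals `(k/n) P(Wₙ = -k)`. -/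
theorem stmt_5 (μ : ℕ → ℝ) (hpos : ∀ j, 0 ≤ μ j)
    (hsum : ∑' j, μ j = 1)
    (hmean_summable : Summable (fun j : ℕ => (j : ℝ) * μ j))
    (hmean : ∑' j : ℕ, (j : ℝ) * μ j ≤ 1)
    (k n : ℕ) (hk : 1 ≤ k) (hn : 1 ≤ n) :
    (∑' F : {F : Fin k → PlaneTree // ∑ i, (F i).size = n}, ∏ i, bgwWeight μ (F.1 i)) =
      ((k : ℝ) / n) * walkProb μ n k :=
  stmt_5_general μ k n hn
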